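/- arXiv:1012.4849 — 3 statements merged into one kernel-verified Lean document; each statement's English description precedes it below -/
import Mathlib

section
/- Let (a_k)_{k∈ℤ} be nonnegative real numbers satisfying lim_{k→−∞} a_k = 0 and a_{k+1} ≤ 2·a_k for all k ∈ ℤ. For 0 < r < 1 let J(r) = {k ∈ ℤ : a_{k+1} > r·a_k}. Then Σ_{k∈J(r)} a_k ≥ ((1−r)/(3−r)) · Σ_{k∈ℤ} a_k, where both sums are taken in [0,∞]. -/
/-!
Call `k` a jump if `r * a k < a (k + 1)`. Since `a → 0` at `-∞`, every `k` with `a k > 0` has a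
last jump `m < k`; between `m + 1` and `k` the sequence shrinks by the factor `r` at each step, so
`a k ≤ r ^ n * a (m + 1) ≤ 2 * r ^ n * a m` where `k = m + 1 + n`. As `k` is determined by
`(m, n)`, this gives `∑ a ≤ ∑_J a + ∑_{m ∈ J} ∑_n 2 r ^ n a m = (3 - r) / (1 - r) * ∑_J a`.
-/

open Filter ENNReal

lemma exists_lt_succ_of_tendsto_atBot {a : ℤ → ℝ} (hlim : Tendsto a atBot (nhds 0)) {k : ℤ}
    (hk : 0 < a k) : ∃ m < k, a m < a (m + 1) := by
  by_contra! hdecr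
  have hbelow : ∀ j ≤ k, a k ≤ a j := by
    intro j hj
    induction j, hj using Int.leInductionDown with
    | base => exact le_rfl
    | pred n hn ih => exact ih.trans (by simpa using hdecr (n - 1) (by omega))
  obtain ⟨j, hj, hjk⟩ := ((eventually_le_atBot k).and (hlim.eventually (gt_mem_nhds hk))).exists
  exact (hbelow j hj).not_gt hjk

lemma ENNReal.tsum_ofReal_mul_geometric {x r : ℝ} (hx : 0 ≤ x) (hr0 : 0 ≤ r) (hr1 : r < 1) :
    ∑' n : ℕ, ENNReal.ofReal (x * r ^ n) = ENNReal.ofReal (x / (1 - r)) := by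
  rw [← ENNReal.ofReal_tsum_of_nonneg (fun n => by positivity)
    ((summable_geometric_of_lt_one hr0 hr1).mul_left x), tsum_mul_left,
    tsum_geometric_of_lt_one hr0 hr1, div_eq_mul_inv]

section Jumps

variable {a : ℤ → ℝ} {r : ℝ}

lemma exists_last_jump_lt (ha : ∀ k, 0 ≤ a k) (hlim : Tendsto a atBot (nhds 0)) (hr1 : r ≤ 1)
    {k : ℤ} (hk : 0 < a k) :
    ∃ m < k, r * a m < a (m + 1) ∧ ∀ z, m < z → z < k → a (z + 1) ≤ r * a z := by
  obtain ⟨m₀, hm₀k, hm₀⟩ := exists_lt_succ_of_tendsto_atBot hlim hk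
  have hjump : r * a m₀ < a (m₀ + 1) :=
    lt_of_le_of_lt (mul_le_of_le_one_left (ha m₀) hr1) hm₀
  obtain ⟨m, ⟨hmk, hm⟩, hmax⟩ := Int.exists_greatest_of_bdd
    (P := fun m => m < k ∧ r * a m < a (m + 1)) ⟨k, fun z hz => hz.1.le⟩ ⟨m₀, hm₀k, hjump⟩
  exact ⟨m, hmk, hm, fun z hmz hzk => not_lt.mp fun hz => (hmax z ⟨hzk, hz⟩).not_gt hmz⟩

lemma exists_jump_le_geom (ha : ∀ k, 0 ≤ a k) (hlim : Tendsto a atBot (nhds 0))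
    (hdbl : ∀ k, a (k + 1) ≤ 2 * a k) (hr0 : 0 ≤ r) (hr1 : r ≤ 1) {k : ℤ} (hk : 0 < a k) :
    ∃ m : ℤ, ∃ n : ℕ, r * a m < a (m + 1) ∧ m + 1 + n = k ∧ a k ≤ 2 * a m * r ^ n := by
  obtain ⟨m, hmk, hm, hdecay⟩ := exists_last_jump_lt ha hlim hr1 hk
  obtain ⟨n, hn⟩ : ∃ n : ℕ, m + 1 + n = k := ⟨(k - m - 1).toNat, by omega⟩
  refine ⟨m, n, hm, hn, ?_⟩
  have hgeom : a k ≤ r ^ n * a (m + 1) := by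
    subst hn
    simpa using le_geom (u := fun i => a (m + 1 + i)) hr0 n fun i hi =>
      by rw [Nat.cast_succ, ← add_assoc]; exact hdecay (m + 1 + i) (by omega) (by omega)
  calc a k ≤ r ^ n * a (m + 1) := hgeom
    _ ≤ r ^ n * (2 * a m) := by gcongr; exact hdbl m
    _ = 2 * a m * r ^ n := by ring

lemma tsum_ofReal_le_mul_tsum_jumps (ha : ∀ k, 0 ≤ a k) (hlim : Tendsto a atBot (nhds 0))
    (hdbl : ∀ k, a (k + 1) ≤ 2 * a k) (hr0 : 0 ≤ r) (hr1 : r < 1) :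
    ∑' k, ENNReal.ofReal (a k) ≤ ENNReal.ofReal ((3 - r) / (1 - r)) *
      ∑' k : {k : ℤ // r * a k < a (k + 1)}, ENNReal.ofReal (a k.1) := by
  have h1r : 0 < 1 - r := by linarith
  set J : Set ℤ := {k | r * a k < a (k + 1)}
  set f : ℤ → ℝ≥0∞ := fun k => ENNReal.ofReal (a k)
  let ψ : J × ℕ → ℤ := fun p => p.1 + 1 + p.2
  let g : J × ℕ → ℝ≥0∞ := fun p => ENNReal.ofReal (2 * a p.1 * r ^ p.2)
  have hcover : ∀ k, f k ≤ J.indicator f k + ∑' p : ψ ⁻¹' {k}, g p := by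
    intro k
    rcases (ha k).eq_or_lt with hk | hk
    · simp [f, ← hk]
    obtain ⟨m, n, hm, rfl, hle⟩ := exists_jump_le_geom ha hlim hdbl hr0 hr1.le hk
    calc f (m + 1 + n) ≤ g (⟨m, hm⟩, n) := ENNReal.ofReal_le_ofReal hle
      _ ≤ ∑' p : ψ ⁻¹' {m + 1 + n}, g p :=
        ENNReal.le_tsum (f := fun p : ψ ⁻¹' {m + 1 + n} => g p) ⟨(⟨m, hm⟩, n), rfl⟩
      _ ≤ _ := le_add_self
  have hgeom : ∀ m : J, ∑' n : ℕ, g (m, n) = ENNReal.ofReal (2 / (1 - r)) * f m := by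
    intro m
    have := ha m
    change ∑' n : ℕ, ENNReal.ofReal (2 * a m * r ^ n) = _
    rw [ENNReal.tsum_ofReal_mul_geometric (by positivity) hr0 hr1,
      ← ENNReal.ofReal_mul (by positivity)]
    ring_nf
  calc ∑' k, f k ≤ ∑' k, (J.indicator f k + ∑' p : ψ ⁻¹' {k}, g p) :=
        ENNReal.tsum_le_tsum hcover
    _ = ∑' k : J, f k + ∑' p, g p := by
      rw [ENNReal.tsum_add, ← tsum_subtype, ENNReal.tsum_fiberwise]
    _ = ∑' k : J, f k + ENNReal.ofReal (2 / (1 - r)) * ∑' k : J, f k := by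
      rw [ENNReal.tsum_prod', tsum_congr hgeom, ENNReal.tsum_mul_left]
    _ = ENNReal.ofReal ((3 - r) / (1 - r)) * ∑' k : J, f k := by
      rw [← one_add_mul, ← ENNReal.ofReal_one, ← ENNReal.ofReal_add zero_le_one (by positivity)]
      congr 2
      field_simp
      ring

end Jumps

/-- If `a : ℤ → ℝ` is nonnegative, `a k → 0` as `k → -∞`, and
`a (k+1) ≤ 2 * a k` for all `k`, then for `0 < r < 1`,
`∑_{k ∈ J(r)} a k ≥ ((1-r)/(3-r)) ∑_{k ∈ ℤ} a k`, where
`J(r) = {k : a (k+1) > r * a k}` and the sums are taken in `[0,∞]`. -/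
theorem stmt_1 (a : ℤ → ℝ) (ha : ∀ k, 0 ≤ a k)
    (hlim : Tendsto a atBot (nhds 0))
    (hdbl : ∀ k, a (k + 1) ≤ 2 * a k)
    (r : ℝ) (hr0 : 0 < r) (hr1 : r < 1) :
    ENNReal.ofReal ((1 - r) / (3 - r)) * ∑' k : ℤ, ENNReal.ofReal (a k) ≤
      ∑' k : {k : ℤ // r * a k < a (k + 1)}, ENNReal.ofReal (a k.1) := by
  have h1r : 0 < 1 - r := by linarith
  have h3r : 0 < 3 - r := by linarith
  calc ENNReal.ofReal ((1 - r) / (3 - r)) * ∑' k : ℤ, ENNReal.ofReal (a k)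
      ≤ ENNReal.ofReal ((1 - r) / (3 - r)) * (ENNReal.ofReal ((3 - r) / (1 - r)) *
          ∑' k : {k : ℤ // r * a k < a (k + 1)}, ENNReal.ofReal (a k.1)) := by
        gcongr
        exact tsum_ofReal_le_mul_tsum_jumps ha hlim hdbl hr0.le hr1
    _ = ∑' k : {k : ℤ // r * a k < a (k + 1)}, ENNReal.ofReal (a k.1) := by
        rw [← mul_assoc, ← ENNReal.ofReal_mul (by positivity),
          show (1 - r) / (3 - r) * ((3 - r) / (1 - r)) = 1 by field_simp, ENNReal.ofReal_one,
          one_mul]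
end

section
/- There is a constant C ≤ 3 (in fact C = 3 works) such that for every L¹-bounded martingale f on a filtered probability space and every λ > 0, one has λ · P(S(f) > λ) ≤ C · ‖f‖₁, where ‖f‖₁ = sup_n E|f_n|. -/
/-!
Split `{S(f) > λ}` according to whether the path `(f n)` ever leaves `[-λ, λ]`. Doob's maximal
inequality for the submartingale `|f n|` bounds `λ · P(f leaves)` by `‖f‖₁`. Where the path
stays inside, `S(f)²` is the sum of the truncated squares
`q n = (d n)² · 1{|f (n-1)|, |f n| ≤ λ}`. The Huber function `φ` (equal to `x²` on `[-λ, λ]`,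
linear outside, `φ' = 2 clip`) satisfies
`q n + φ'(f (n-1)) · d n ≤ φ(f n) - φ(f (n-1))` pointwise; the middle term has mean zero since
`φ'` is bounded, so `E ∑_{n ≤ N} q n ≤ E φ(f N) ≤ 2λ ‖f‖₁`, and Chebyshev gives
`λ · P(S(f) > λ, f stays) ≤ 2 ‖f‖₁`.
-/

open MeasureTheory ENNReal NNReal

noncomputable section

/-- The difference sequence of a (discrete-time) process: `d 0 = f 0`,
`d n = f n - f (n-1)` for `n ≥ 1`. -/
def martDiff {Ω : Type*} (f : ℕ → Ω → ℝ) : ℕ → Ω → ℝ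
  | 0 => f 0
  | (n + 1) => fun ω => f (n + 1) ω - f n ω

/-- The square function `S(f) = (∑ d_n²)^{1/2}`, valued in `[0,∞]`. -/
def squareFn {Ω : Type*} (f : ℕ → Ω → ℝ) (ω : Ω) : ℝ≥0∞ :=
  (∑' n : ℕ, ENNReal.ofReal ((martDiff f n ω) ^ 2)) ^ (1 / 2 : ℝ)

/-- The martingale norm `‖f‖_p = sup_n (E|f_n|^p)^{1/p}`, valued in `[0,∞]`. -/
def martNorm {Ω : Type*} [MeasurableSpace Ω] (P : Measure Ω) (f : ℕ → Ω → ℝ)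
    (p : ℝ) : ℝ≥0∞ :=
  ⨆ n : ℕ, (∫⁻ ω, ENNReal.ofReal |f n ω| ^ p ∂P) ^ (1 / p)

def clip (lam x : ℝ) : ℝ := max (-lam) (min lam x)

/-- The Huber function: `x ^ 2` on `[-lam, lam]` and `2 * lam * |x| - lam ^ 2` outside. The value
`t = clip lam x` maximizes `t ↦ 2 * t * x - t ^ 2` over `[-lam, lam]`. -/
def huber (lam x : ℝ) : ℝ := 2 * clip lam x * x - clip lam x ^ 2

section Huber

variable {lam : ℝ}

lemma abs_clip_le (hl : 0 ≤ lam) (x : ℝ) : |clip lam x| ≤ lam :=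
  abs_le.2 ⟨le_max_left _ _, max_le (by linarith) (min_le_left _ _)⟩

lemma clip_of_abs_le {x : ℝ} (h : |x| ≤ lam) : clip lam x = x := by
  rw [abs_le] at h
  rw [clip, min_eq_right h.2, max_eq_right h.1]

lemma continuous_clip (lam : ℝ) : Continuous (clip lam) := by
  unfold clip; fun_prop

lemma continuous_huber (lam : ℝ) : Continuous (huber lam) := by
  have := continuous_clip lam
  unfold huber; fun_prop

lemma huber_of_abs_le {x : ℝ} (h : |x| ≤ lam) : huber lam x = x ^ 2 := by
  rw [huber, clip_of_abs_le h]; ring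

lemma two_mul_mul_sub_sq_le_huber {t : ℝ} (ht : |t| ≤ lam) (x : ℝ) :
    2 * t * x - t ^ 2 ≤ huber lam x := by
  rw [abs_le] at ht
  unfold huber clip
  rcases le_total lam x with hx | hx
  · rw [min_eq_left hx, max_eq_right (by linarith)]; nlinarith
  rw [min_eq_right hx]
  rcases le_total (-lam) x with hx' | hx'
  · rw [max_eq_right hx']; nlinarith [sq_nonneg (x - t)]
  · rw [max_eq_left hx']; nlinarith

lemma huber_nonneg (hl : 0 ≤ lam) (x : ℝ) : 0 ≤ huber lam x := by
  simpa using two_mul_mul_sub_sq_le_huber (t := 0) (by simpa using hl) x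

lemma huber_le (hl : 0 ≤ lam) (x : ℝ) : huber lam x ≤ 2 * lam * |x| := by
  have hc := abs_clip_le hl x
  have : clip lam x * x ≤ lam * |x| :=
    (le_abs_self _).trans (by rw [abs_mul]; exact mul_le_mul_of_nonneg_right hc (abs_nonneg x))
  unfold huber; nlinarith [sq_nonneg (clip lam x)]

lemma two_mul_clip_mul_sub_le_huber_sub (hl : 0 ≤ lam) (a b : ℝ) :
    2 * clip lam a * (b - a) ≤ huber lam b - huber lam a := by
  have := two_mul_mul_sub_sq_le_huber (abs_clip_le hl a) b
  unfold huber at *; linarith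

lemma ite_sq_add_two_mul_clip_le_huber_sub (hl : 0 ≤ lam) (a b : ℝ) :
    (if |a| ≤ lam ∧ |b| ≤ lam then (b - a) ^ 2 else 0) + 2 * clip lam a * (b - a) ≤
      huber lam b - huber lam a := by
  split_ifs with h
  · rw [clip_of_abs_le h.1, huber_of_abs_le h.1, huber_of_abs_le h.2]; exact le_of_eq (by ring)
  · simpa using two_mul_clip_mul_sub_le_huber_sub hl a b

end Huber

/-- For `n = 0` the natural subtraction makes `n - 1 = 0`, so the condition reads
`|f 0| ≤ lam`. -/
def truncDiffSq {Ω : Type*} (f : ℕ → Ω → ℝ) (lam : ℝ) (n : ℕ) (ω : Ω) : ℝ :=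
  if |f (n - 1) ω| ≤ lam ∧ |f n ω| ≤ lam then martDiff f n ω ^ 2 else 0

section Increments

variable {Ω : Type*} {f : ℕ → Ω → ℝ} {lam : ℝ}

lemma abs_martDiff_le (f : ℕ → Ω → ℝ) (n : ℕ) (ω : Ω) :
    |martDiff f n ω| ≤ |f n ω| + |f (n - 1) ω| := by
  cases n with
  | zero => simp [martDiff]
  | succ k => exact abs_sub _ _

lemma squareFn_sq (f : ℕ → Ω → ℝ) (ω : Ω) :
    squareFn f ω ^ 2 = ∑' n, ENNReal.ofReal (martDiff f n ω ^ 2) := by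
  rw [squareFn, ← ENNReal.rpow_natCast, ← ENNReal.rpow_mul]
  norm_num

lemma truncDiffSq_nonneg (n : ℕ) (ω : Ω) : 0 ≤ truncDiffSq f lam n ω := by
  unfold truncDiffSq; split_ifs <;> positivity

lemma truncDiffSq_le (n : ℕ) (ω : Ω) : truncDiffSq f lam n ω ≤ (2 * lam) ^ 2 := by
  unfold truncDiffSq
  split_ifs with h
  · have := abs_martDiff_le f n ω
    nlinarith [sq_abs (martDiff f n ω), abs_nonneg (martDiff f n ω)]
  · positivity

lemma truncDiffSq_of_forall_abs_le {ω : Ω} (h : ∀ n, |f n ω| ≤ lam) (n : ℕ) :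
    truncDiffSq f lam n ω = martDiff f n ω ^ 2 :=
  if_pos ⟨h _, h _⟩

variable [MeasurableSpace Ω]

lemma measurable_martDiff (hf : ∀ n, Measurable (f n)) (n : ℕ) : Measurable (martDiff f n) := by
  cases n with
  | zero => exact hf 0
  | succ k => exact (hf (k + 1)).sub (hf k)

lemma measurable_truncDiffSq (hf : ∀ n, Measurable (f n)) (n : ℕ) :
    Measurable (truncDiffSq f lam n) :=
  Measurable.ite ((measurableSet_le (hf _).abs measurable_const).inter
    (measurableSet_le (hf n).abs measurable_const)) ((measurable_martDiff hf n).pow_const 2)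
    measurable_const

end Increments

section Martingale

variable {Ω : Type*} {m0 : MeasurableSpace Ω} {P : Measure Ω} {ℱ : Filtration ℕ m0}
  {f : ℕ → Ω → ℝ} {lam : ℝ}

lemma MeasureTheory.Martingale.integral_mul_sub_eq_zero [IsFiniteMeasure P]
    (hf : Martingale f ℱ P) {i j : ℕ} (hij : i ≤ j) {c : Ω → ℝ} {C : ℝ}
    (hc : StronglyMeasurable[ℱ i] c) (hcC : ∀ ω, |c ω| ≤ C) :
    ∫ ω, c ω * (f j ω - f i ω) ∂P = 0 := by
  have hc' : AEStronglyMeasurable c P := (hc.mono (ℱ.le i)).aestronglyMeasurable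
  have hbdd : ∀ᵐ ω ∂P, ‖c ω‖ ≤ C := ae_of_all P hcC
  have hj : Integrable (c * f j) P := (hf.integrable j).bdd_mul hc' hbdd
  have hi : Integrable (c * f i) P := (hf.integrable i).bdd_mul hc' hbdd
  have hpull : ∫ ω, (c * f j) ω ∂P = ∫ ω, (c * f i) ω ∂P :=
    calc ∫ ω, (c * f j) ω ∂P = ∫ ω, (P[c * f j | ℱ i]) ω ∂P :=
          (integral_condExp (ℱ.le i)).symm
      _ = ∫ ω, (c * P[f j | ℱ i]) ω ∂P :=
        integral_congr_ae (condExp_mul_of_stronglyMeasurable_left hc hj (hf.integrable j))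
      _ = ∫ ω, (c * f i) ω ∂P :=
        integral_congr_ae ((hf.condExp_ae_eq hij).mono fun ω hω => by simp [hω])
  have hsub := integral_sub hj hi
  simp only [Pi.mul_apply] at hsub hpull
  simp_rw [mul_sub]
  rw [hsub, hpull, sub_self]

lemma MeasureTheory.Martingale.measurable (hf : Martingale f ℱ P) (n : ℕ) : Measurable (f n) :=
  ((hf.stronglyAdapted n).mono (ℱ.le n)).measurable

lemma integrable_truncDiffSq [IsFiniteMeasure P] (hf : Martingale f ℱ P) (n : ℕ) :
    Integrable (truncDiffSq f lam n) P :=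
  Integrable.of_bound (measurable_truncDiffSq hf.measurable n).aestronglyMeasurable ((2 * lam) ^ 2)
    (ae_of_all P fun ω => by
      rw [Real.norm_eq_abs, abs_of_nonneg (truncDiffSq_nonneg n ω)]
      exact truncDiffSq_le n ω)

lemma MeasureTheory.Integrable.huber_comp {g : Ω → ℝ} (hg : Integrable g P) (hl : 0 ≤ lam) :
    Integrable (fun ω => huber lam (g ω)) P :=
  Integrable.mono' (hg.abs.const_mul (2 * lam))
    ((continuous_huber lam).comp_aestronglyMeasurable hg.aestronglyMeasurable)
    (ae_of_all P fun ω => by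
      rw [Real.norm_eq_abs, abs_of_nonneg (huber_nonneg hl _)]
      exact huber_le hl _)

variable [IsFiniteMeasure P]

lemma integral_truncDiffSq_zero_le (hf : Martingale f ℱ P) (hl : 0 ≤ lam) :
    ∫ ω, truncDiffSq f lam 0 ω ∂P ≤ ∫ ω, huber lam (f 0 ω) ∂P := by
  refine integral_mono (integrable_truncDiffSq hf 0) ((hf.integrable 0).huber_comp hl) fun ω => ?_
  unfold truncDiffSq
  split_ifs with h
  · rw [martDiff, huber_of_abs_le h.2]
  · exact huber_nonneg hl _

/-- The cross term of `ite_sq_add_two_mul_clip_le_huber_sub` integrates to zero, since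
`clip lam (f k)` is bounded and `ℱ k`-measurable. -/
lemma integral_truncDiffSq_succ_le (hf : Martingale f ℱ P) (hl : 0 ≤ lam) (k : ℕ) :
    ∫ ω, truncDiffSq f lam (k + 1) ω ∂P ≤
      ∫ ω, huber lam (f (k + 1) ω) ∂P - ∫ ω, huber lam (f k ω) ∂P := by
  set cross := fun ω => 2 * clip lam (f k ω) * (f (k + 1) ω - f k ω)
  have hc : StronglyMeasurable[ℱ k] fun ω => 2 * clip lam (f k ω) :=
    ((continuous_clip lam).comp_stronglyMeasurable (hf.stronglyAdapted k)).const_mul 2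
  have hc_le : ∀ ω, |2 * clip lam (f k ω)| ≤ 2 * lam := fun ω => by
    rw [abs_mul, abs_two]; linarith [abs_clip_le hl (f k ω)]
  have hcross : Integrable cross P :=
    ((hf.integrable (k + 1)).sub (hf.integrable k)).bdd_mul
      (hc.mono (ℱ.le k)).aestronglyMeasurable (ae_of_all P hc_le)
  have hcross_zero : ∫ ω, cross ω ∂P = 0 := hf.integral_mul_sub_eq_zero k.le_succ hc hc_le
  have hmono : ∫ ω, (truncDiffSq f lam (k + 1) ω + cross ω) ∂P ≤
      ∫ ω, (huber lam (f (k + 1) ω) - huber lam (f k ω)) ∂P :=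
    integral_mono ((integrable_truncDiffSq hf (k + 1)).add hcross)
    (((hf.integrable (k + 1)).huber_comp hl).sub ((hf.integrable k).huber_comp hl))
    fun ω => ite_sq_add_two_mul_clip_le_huber_sub hl (f k ω) (f (k + 1) ω)
  rwa [integral_add (integrable_truncDiffSq hf (k + 1)) hcross, hcross_zero, add_zero,
    integral_sub ((hf.integrable (k + 1)).huber_comp hl) ((hf.integrable k).huber_comp hl)] at hmono

lemma sum_integral_truncDiffSq_le (hf : Martingale f ℱ P) (hl : 0 ≤ lam) (N : ℕ) :
    ∑ k ∈ Finset.range (N + 1), ∫ ω, truncDiffSq f lam k ω ∂P ≤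
      ∫ ω, huber lam (f N ω) ∂P := by
  induction N with
  | zero => simpa using integral_truncDiffSq_zero_le hf hl
  | succ N ih =>
    rw [Finset.sum_range_succ]
    linarith [integral_truncDiffSq_succ_le hf hl N]

end Martingale

lemma ofReal_integral_abs_le_martNorm {Ω : Type*} [MeasurableSpace Ω] {P : Measure Ω}
    {f : ℕ → Ω → ℝ} {n : ℕ} (hf : Integrable (f n) P) :
    ENNReal.ofReal (∫ ω, |f n ω| ∂P) ≤ martNorm P f 1 := by
  rw [ofReal_integral_eq_lintegral_ofReal hf.abs (ae_of_all P fun ω => abs_nonneg _)]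
  simpa [martNorm] using le_iSup (fun n => ∫⁻ ω, ENNReal.ofReal |f n ω| ∂P) n

section WeakType

variable {Ω : Type*} {m0 : MeasurableSpace Ω} {P : Measure Ω} [IsFiniteMeasure P]
  {ℱ : Filtration ℕ m0} {f : ℕ → Ω → ℝ} {lam : ℝ}

lemma ofReal_mul_meas_exists_le_abs_le (hf : Martingale f ℱ P) (hl : 0 ≤ lam) :
    ENNReal.ofReal lam * P {ω | ∃ n, lam ≤ |f n ω|} ≤ martNorm P f 1 := by
  have habs : Submartingale (fun n ω => |f n ω|) ℱ P := by
    have h : (fun n ω => |f n ω|) = f ⊔ -f := funext₂ fun n ω => abs_eq_max_neg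
    exact h ▸ hf.submartingale.sup hf.neg.submartingale
  have hmono : Monotone fun N => {ω | ∃ n ≤ N, lam ≤ |f n ω|} :=
    fun N M hNM ω ⟨n, hn, h⟩ => ⟨n, hn.trans hNM, h⟩
  have hunion : {ω | ∃ n, lam ≤ |f n ω|} = ⋃ N, {ω | ∃ n ≤ N, lam ≤ |f n ω|} := by
    ext ω
    simp only [Set.mem_ofPred_eq, Set.mem_iUnion]
    exact ⟨fun ⟨n, h⟩ => ⟨n, n, le_rfl, h⟩, fun ⟨_, n, _, h⟩ => ⟨n, h⟩⟩
  rw [hunion, hmono.measure_iUnion, ENNReal.mul_iSup]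
  refine iSup_le fun N => ?_
  set D := {ω | (lam.toNNReal : ℝ) ≤
    (Finset.range (N + 1)).sup' Finset.nonempty_range_add_one fun k => |f k ω|}
  have hset : {ω | ∃ n ≤ N, lam ≤ |f n ω|} = D := by
    ext ω
    simp [D, Finset.le_sup'_iff, Real.coe_toNNReal _ hl]
  rw [hset]
  calc ENNReal.ofReal lam * P D = lam.toNNReal * P D := rfl
    _ ≤ ENNReal.ofReal (∫ ω in D, |f N ω| ∂P) := maximal_ineq habs (fun n ω => abs_nonneg _) N
    _ ≤ ENNReal.ofReal (∫ ω, |f N ω| ∂P) := ENNReal.ofReal_le_ofReal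
        (setIntegral_le_integral (hf.integrable N).abs (ae_of_all P fun ω => abs_nonneg _))
    _ ≤ martNorm P f 1 := ofReal_integral_abs_le_martNorm (hf.integrable N)

lemma lintegral_tsum_truncDiffSq_le (hf : Martingale f ℱ P) (hl : 0 ≤ lam) :
    ∫⁻ ω, ∑' n, ENNReal.ofReal (truncDiffSq f lam n ω) ∂P ≤
      ENNReal.ofReal (2 * lam) * martNorm P f 1 := by
  rw [lintegral_tsum fun n => (measurable_truncDiffSq hf.measurable n).ennreal_ofReal.aemeasurable,
    ENNReal.tsum_eq_iSup_nat' (Filter.tendsto_add_atTop_nat 1)]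
  refine iSup_le fun N => ?_
  calc ∑ k ∈ Finset.range (N + 1), ∫⁻ ω, ENNReal.ofReal (truncDiffSq f lam k ω) ∂P
      = ENNReal.ofReal (∑ k ∈ Finset.range (N + 1), ∫ ω, truncDiffSq f lam k ω ∂P) := by
        rw [ENNReal.ofReal_sum_of_nonneg fun k _ => integral_nonneg (truncDiffSq_nonneg k)]
        exact Finset.sum_congr rfl fun k _ => (ofReal_integral_eq_lintegral_ofReal
          (integrable_truncDiffSq hf k) (ae_of_all P (truncDiffSq_nonneg k))).symm
    _ ≤ ENNReal.ofReal (∫ ω, 2 * lam * |f N ω| ∂P) := ENNReal.ofReal_le_ofReal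
        ((sum_integral_truncDiffSq_le hf hl N).trans (integral_mono
          ((hf.integrable N).huber_comp hl) ((hf.integrable N).abs.const_mul _)
          fun ω => huber_le hl (f N ω)))
    _ = ENNReal.ofReal (2 * lam) * ENNReal.ofReal (∫ ω, |f N ω| ∂P) := by
        rw [integral_const_mul, ENNReal.ofReal_mul (by positivity)]
    _ ≤ ENNReal.ofReal (2 * lam) * martNorm P f 1 := by
        gcongr; exact ofReal_integral_abs_le_martNorm (hf.integrable N)

lemma ofReal_mul_meas_squareFn_gt_inter_le (hf : Martingale f ℱ P) (hl : 0 < lam) :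
    ENNReal.ofReal lam *
        P ({ω | ENNReal.ofReal lam < squareFn f ω} ∩ {ω | ∀ n, |f n ω| ≤ lam}) ≤
      2 * martNorm P f 1 := by
  set E := {ω | ENNReal.ofReal lam < squareFn f ω} ∩ {ω | ∀ n, |f n ω| ≤ lam}
  set T := fun ω => ∑' n, ENNReal.ofReal (truncDiffSq f lam n ω)
  have hsub : E ⊆ {ω | ENNReal.ofReal lam ^ 2 ≤ T ω} := by
    rintro ω ⟨hS, hB⟩
    have hT : T ω = squareFn f ω ^ 2 := by
      simp only [T, squareFn_sq, truncDiffSq_of_forall_abs_le hB]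
    rw [Set.mem_ofPred_eq, hT]
    exact pow_le_pow_left' hS.le 2
  have hcheb : ENNReal.ofReal lam * (ENNReal.ofReal lam * P E) ≤
      ENNReal.ofReal lam * (2 * martNorm P f 1) :=
    calc _ = ENNReal.ofReal lam ^ 2 * P E := by ring
      _ ≤ ENNReal.ofReal lam ^ 2 * P {ω | ENNReal.ofReal lam ^ 2 ≤ T ω} := by gcongr
      _ ≤ ∫⁻ ω, T ω ∂P := mul_meas_ge_le_lintegral₀ (Measurable.tsum fun n =>
          (measurable_truncDiffSq hf.measurable n).ennreal_ofReal).aemeasurable _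
      _ ≤ ENNReal.ofReal (2 * lam) * martNorm P f 1 := lintegral_tsum_truncDiffSq_le hf hl.le
      _ = _ := by rw [ENNReal.ofReal_mul zero_le_two, ENNReal.ofReal_ofNat]; ring
  exact (ENNReal.mul_le_mul_iff_right (by simpa using hl) ENNReal.ofReal_ne_top).1 hcheb

end WeakType

/-- there is a constant `C ≤ 3` (in fact `C = 3` works) such that for
every `L¹`-bounded martingale `f` and every `λ > 0`,
`λ · P(S(f) > λ) ≤ C · ‖f‖₁`. -/
theorem stmt_3 : ∃ C : ℝ≥0, C ≤ 3 ∧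
    ∀ (Ω : Type) (m0 : MeasurableSpace Ω) (P : Measure Ω), IsProbabilityMeasure P →
      ∀ (ℱ : Filtration ℕ m0) (f : ℕ → Ω → ℝ), Martingale f ℱ P →
        martNorm P f 1 < ∞ →
        ∀ lam : ℝ, 0 < lam →
          ENNReal.ofReal lam * P {ω | ENNReal.ofReal lam < squareFn f ω} ≤
            (C : ℝ≥0∞) * martNorm P f 1 := by
  refine ⟨3, le_rfl, fun Ω _ P _ ℱ f hf _ lam hl => ?_⟩
  set A := {ω | ENNReal.ofReal lam < squareFn f ω}
  set B := {ω | ∀ n, |f n ω| ≤ lam}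
  have hexit : A \ B ⊆ {ω | ∃ n, lam ≤ |f n ω|} := fun ω hω => by
    obtain ⟨n, hn⟩ := not_forall.1 hω.2
    exact ⟨n, (not_le.1 hn).le⟩
  calc ENNReal.ofReal lam * P A
      ≤ ENNReal.ofReal lam * P (A ∩ B) + ENNReal.ofReal lam * P (A \ B) := by
        rw [← mul_add]; gcongr; exact measure_le_inter_add_sdiff P A B
    _ ≤ 2 * martNorm P f 1 + martNorm P f 1 :=
        add_le_add (ofReal_mul_meas_squareFn_gt_inter_le hf hl)
          ((by gcongr : _ ≤ ENNReal.ofReal lam * _).trans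
            (ofReal_mul_meas_exists_le_abs_le hf hl.le))
    _ = ((3 : ℝ≥0) : ℝ≥0∞) * martNorm P f 1 := by norm_num; ring

end
end

section
/- Let ℍ be a real or complex Hilbert space with norm |·|, let 1 < p < ∞, let p* = max(p, q) where 1/p + 1/q = 1, and let α_p = p(1 − 1/p*)^{p−1}. Define V(z,w) = |w|^p − (p*−1)^p|z|^p and U(z,w) = α_p(|w| − (p*−1)|z|)(|z| + |w|)^{p−1} for z, w ∈ ℍ. Then: (i) V(z,w) ≤ U(z,w) for all z, w ∈ ℍ; and (ii) for all z, w, h, k ∈ ℍ with |k| ≤ |h|, the function t ↦ U(z + t·h, w + t·k) is concave on ℝ. -/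
/-!
(i) Both sides are positively homogeneous of degree `p` in `(|z|, |w|)`, so with
`t = |w| / (|z| + |w|)` and `c = p* - 1` the inequality says that `φ t = t ^ p - c ^ p (1 - t) ^ p`
lies below its tangent at `t₀ = c / (1 + c)` on `[0, 1]`, where `φ t₀ = 0`. On one side of `t₀` this
holds because `φ'` is monotone there; on the other because `φ'` is convex (`p ≥ 2`) or concave
(`p ≤ 2`), so it is controlled by its values at `t₀` and at the endpoint, and the endpoint
comparison is Bernoulli's inequality (`p ≥ 2`) or the weighted AM-GM inequality (`p ≤ 2`).

(ii) Replace `|z + t h|` and `|w + t k|` by `x = √(|z + t h|² + ε)` and `y = √(|w + t k|² + ε)`.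
These are square roots of positive quadratics, so `x x'' = |h|² - x'²`, `y y'' = |k|² - y'²`,
`x'² ≤ |h|²` and `y'² ≤ |k|²`. The second derivative of `(y - c x) (x + y) ^ (p - 1)` is
`(x + y) ^ (p - 3)` times a polynomial in these quantities, which is nonpositive once `|k| ≤ |h|`.
Concavity passes to the pointwise limit `ε → 0`.
-/

open Real Set Filter Topology

theorem le_tangent_of_hasDerivAt {f f' : ℝ → ℝ} {a b x₀ : ℝ}
    (hf : ∀ x, HasDerivAt f (f' x) x) (hleft : ∀ x ∈ Icc a x₀, f' x₀ ≤ f' x)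
    (hright : ∀ x ∈ Icc x₀ b, f' x ≤ f' x₀) {x : ℝ} (hx : x ∈ Icc a b) :
    f x ≤ f x₀ + f' x₀ * (x - x₀) := by
  set g : ℝ → ℝ := fun x => f x - f' x₀ * x
  have hg : ∀ x, HasDerivAt g (f' x - f' x₀) x := fun x =>
    ((hf x).sub ((hasDerivAt_id' x).const_mul (f' x₀))).congr_deriv (by ring)
  have hgc : Continuous g := continuous_iff_continuousAt.2 fun x => (hg x).continuousAt
  suffices g x ≤ g x₀ by simp only [g] at this; linarith
  rcases le_total x x₀ with hxx₀ | hx₀x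
  · refine monotoneOn_of_hasDerivWithinAt_nonneg (convex_Icc a x₀) hgc.continuousOn
      (fun y _ => (hg y).hasDerivWithinAt) (fun y hy => ?_) ⟨hx.1, hxx₀⟩
      ⟨hx.1.trans hxx₀, le_rfl⟩ hxx₀
    rw [interior_Icc] at hy
    exact sub_nonneg.2 (hleft y (Ioo_subset_Icc_self hy))
  · refine antitoneOn_of_hasDerivWithinAt_nonpos (convex_Icc x₀ b) hgc.continuousOn
      (fun y _ => (hg y).hasDerivWithinAt) (fun y hy => ?_) ⟨le_rfl, hx₀x.trans hx.2⟩
      ⟨hx₀x, hx.2⟩ hx₀x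
    rw [interior_Icc] at hy
    exact sub_nonpos.2 (hright y (Ioo_subset_Icc_self hy))

theorem ConcaveOn.of_tendsto {ι E : Type*} [AddCommMonoid E] [Module ℝ E] {l : Filter ι} [l.NeBot]
    {s : Set E} {f : ι → E → ℝ} {g : E → ℝ} (hf : ∀ᶠ i in l, ConcaveOn ℝ s (f i))
    (hg : ∀ x ∈ s, Tendsto (fun i => f i x) l (𝓝 (g x))) : ConcaveOn ℝ s g := by
  obtain ⟨i, hi⟩ := hf.exists
  refine ⟨hi.1, fun x hx y hy a b ha hb hab => ?_⟩
  exact le_of_tendsto_of_tendsto (((hg x hx).const_smul a).add ((hg y hy).const_smul b))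
    (hg _ (hi.1 hx hy ha hb hab)) (hf.mono fun i hi => hi.2 hx hy ha hb hab)

/-- `S ^ (3 - p)` times the second derivative of `D * S ^ (p - 1)`, in terms of the values and the
first two derivatives of `D` and `S`. -/
def rpowCurvature (p D D' D'' S S' S'' : ℝ) : ℝ :=
  D'' * S ^ 2 + 2 * (p - 1) * D' * S * S' + (p - 1) * (p - 2) * D * S' ^ 2 + (p - 1) * D * S * S''

theorem concaveOn_mul_rpow {p : ℝ} {D D' D'' S S' S'' : ℝ → ℝ}
    (hD : ∀ t, HasDerivAt D (D' t) t) (hD' : ∀ t, HasDerivAt D' (D'' t) t)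
    (hS : ∀ t, HasDerivAt S (S' t) t) (hS' : ∀ t, HasDerivAt S' (S'' t) t) (hpos : ∀ t, 0 < S t)
    (hcurv : ∀ t, rpowCurvature p (D t) (D' t) (D'' t) (S t) (S' t) (S'' t) ≤ 0) :
    ConcaveOn ℝ univ (fun t => D t * S t ^ (p - 1)) := by
  have hS₁ : ∀ t, S t ^ (p - 2) = S t ^ (p - 3) * S t := fun t => by
    rw [← rpow_add_one (hpos t).ne']; ring_nf
  have hS₂ : ∀ t, S t ^ (p - 1) = S t ^ (p - 3) * S t ^ 2 := fun t => by
    rw [← rpow_natCast, ← rpow_add (hpos t)]; ring_nf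
  have h1 : ∀ t, HasDerivAt (fun t => D t * S t ^ (p - 1))
      (D' t * S t ^ (p - 1) + (p - 1) * D t * S' t * S t ^ (p - 2)) t := fun t => by
    refine ((hD t).mul ((hS t).rpow_const (Or.inl (hpos t).ne'))).congr_deriv ?_
    rw [show p - 1 - 1 = p - 2 by ring]
    ring
  have h2 : ∀ t, HasDerivAt (fun t => D' t * S t ^ (p - 1) + (p - 1) * D t * S' t * S t ^ (p - 2))
      (S t ^ (p - 3) * rpowCurvature p (D t) (D' t) (D'' t) (S t) (S' t) (S'' t)) t := fun t => by
    have hSp1 := (hS t).rpow_const (p := p - 1) (Or.inl (hpos t).ne')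
    have hSp2 := (hS t).rpow_const (p := p - 2) (Or.inl (hpos t).ne')
    refine (((hD' t).mul hSp1).add
      ((((hD t).const_mul (p - 1)).mul (hS' t)).mul hSp2)).congr_deriv ?_
    simp only [Pi.mul_apply]
    rw [show p - 1 - 1 = p - 2 by ring, show p - 2 - 1 = p - 3 by ring, hS₂, hS₁, rpowCurvature]
    ring
  refine concaveOn_of_hasDerivWithinAt2_nonpos convex_univ
    (continuous_iff_continuousAt.2 fun t => (h1 t).continuousAt).continuousOn
    (fun t _ => (h1 t).hasDerivWithinAt) (fun t _ => (h2 t).hasDerivWithinAt)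
    (fun t _ => mul_nonpos_of_nonneg_of_nonpos (rpow_nonneg (hpos t).le _) (hcurv t))

section SqrtQuadratic

variable {a b C t : ℝ}

noncomputable def sqrtQuad (a b C t : ℝ) : ℝ := √(a + 2 * b * t + C * t ^ 2)

noncomputable def sqrtQuadDeriv (a b C t : ℝ) : ℝ := (b + C * t) / sqrtQuad a b C t

theorem sqrtQuad_pos (h : 0 < a + 2 * b * t + C * t ^ 2) : 0 < sqrtQuad a b C t :=
  sqrt_pos.2 h

theorem hasDerivAt_sqrtQuad (h : 0 < a + 2 * b * t + C * t ^ 2) :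
    HasDerivAt (sqrtQuad a b C) (sqrtQuadDeriv a b C t) t := by
  have hq := (((hasDerivAt_id' t).const_mul (2 * b)).const_add a).add
    ((hasDerivAt_pow 2 t).const_mul C)
  refine (hq.sqrt h.ne').congr_deriv ?_
  simp only [sqrtQuadDeriv, sqrtQuad, Pi.add_apply]
  field_simp
  ring

theorem hasDerivAt_sqrtQuadDeriv (h : 0 < a + 2 * b * t + C * t ^ 2) :
    HasDerivAt (sqrtQuadDeriv a b C) ((C - sqrtQuadDeriv a b C t ^ 2) / sqrtQuad a b C t) t := by
  have hpos := sqrtQuad_pos h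
  have hl := ((hasDerivAt_id' t).const_mul C).const_add b
  refine (hl.div (hasDerivAt_sqrtQuad h) hpos.ne').congr_deriv ?_
  rw [sqrtQuadDeriv]
  field_simp

theorem sqrtQuadDeriv_sq_le (hQ : ∀ t, 0 < a + 2 * b * t + C * t ^ 2) (t : ℝ) :
    sqrtQuadDeriv a b C t ^ 2 ≤ C := by
  have hdisc : discrim C (2 * b) a ≤ 0 := discrim_le_zero fun t => by nlinarith [hQ t]
  rw [discrim] at hdisc
  rw [sqrtQuadDeriv, div_pow, sqrtQuad, sq_sqrt (hQ t).le, div_le_iff₀ (hQ t)]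
  nlinarith

end SqrtQuadratic

theorem norm_add_smul_sq {𝕜 ℍ : Type*} [RCLike 𝕜] [NormedAddCommGroup ℍ] [InnerProductSpace 𝕜 ℍ]
    [NormedSpace ℝ ℍ] [IsScalarTower ℝ 𝕜 ℍ] (z h : ℍ) (t : ℝ) :
    ‖z + t • h‖ ^ 2 = ‖z‖ ^ 2 + 2 * RCLike.re (inner 𝕜 z h) * t + ‖h‖ ^ 2 * t ^ 2 := by
  rw [norm_add_sq (𝕜 := 𝕜), norm_smul, RCLike.real_smul_eq_coe_smul (K := 𝕜), inner_smul_real_right,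
    RCLike.smul_re, Real.norm_eq_abs, mul_pow, sq_abs]
  ring

namespace Burkholder

variable {p c : ℝ}

/-- The constant `p* - 1`, where `p* = max p q` and `q = p / (p - 1)` is the conjugate exponent. -/
noncomputable def constant (p : ℝ) : ℝ := max (p - 1) (p - 1)⁻¹

theorem constant_cases (hp : 1 < p) :
    (2 ≤ p ∧ constant p = p - 1) ∨ (p ≤ 2 ∧ constant p = (p - 1)⁻¹) := by
  rcases le_total 2 p with h | h
  · exact Or.inl ⟨h, max_eq_left <| (inv_le_one_of_one_le₀ (by linarith)).trans (by linarith)⟩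
  · exact Or.inr ⟨h, max_eq_right <| (by linarith : p - 1 ≤ 1).trans
      (one_le_inv₀ (by linarith) |>.2 (by linarith))⟩

theorem one_le_constant (hp : 1 < p) : 1 ≤ constant p := by
  rcases constant_cases hp with ⟨h, hc⟩ | ⟨h, hc⟩ <;> rw [hc]
  · linarith
  · exact one_le_inv₀ (by linarith) |>.2 (by linarith)

theorem max_sub_one_eq_constant {q : ℝ} (h : p.HolderConjugate q) : max p q - 1 = constant p := by
  rw [constant, ← max_sub_sub_right, h.conjugate_eq]
  congr 1
  field_simp [h.sub_one_ne_zero]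
  ring

noncomputable def phi (p c t : ℝ) : ℝ := t ^ p - c ^ p * (1 - t) ^ p

noncomputable def phiDeriv (p c t : ℝ) : ℝ := p * t ^ (p - 1) + p * c ^ p * (1 - t) ^ (p - 1)

noncomputable def phiDeriv2 (p c t : ℝ) : ℝ :=
  p * (p - 1) * (t ^ (p - 2) - c ^ p * (1 - t) ^ (p - 2))

noncomputable def phiDeriv3 (p c t : ℝ) : ℝ :=
  p * (p - 1) * (p - 2) * (t ^ (p - 3) + c ^ p * (1 - t) ^ (p - 3))

theorem hasDerivAt_phi (hp : 1 ≤ p) (t : ℝ) : HasDerivAt (phi p c) (phiDeriv p c t) t := by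
  have h1 := (hasDerivAt_id t).rpow_const (p := p) (Or.inr hp)
  have h2 := ((hasDerivAt_id t).const_sub 1).rpow_const (p := p) (Or.inr hp)
  refine (h1.sub (h2.const_mul (c ^ p))).congr_deriv ?_
  simp only [phiDeriv, id]
  ring

theorem hasDerivAt_phiDeriv {t : ℝ} (ht : t ∈ Ioo 0 1) :
    HasDerivAt (phiDeriv p c) (phiDeriv2 p c t) t := by
  have h1 := (hasDerivAt_id t).rpow_const (p := p - 1) (Or.inl ht.1.ne')
  have h2 := ((hasDerivAt_id t).const_sub 1).rpow_const (p := p - 1)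
    (Or.inl (sub_pos.2 ht.2).ne')
  refine ((h1.const_mul p).add (h2.const_mul (p * c ^ p))).congr_deriv ?_
  simp only [phiDeriv2, id, show p - 1 - 1 = p - 2 by ring]
  ring

theorem hasDerivAt_phiDeriv2 {t : ℝ} (ht : t ∈ Ioo 0 1) :
    HasDerivAt (phiDeriv2 p c) (phiDeriv3 p c t) t := by
  have h1 := (hasDerivAt_id t).rpow_const (p := p - 2) (Or.inl ht.1.ne')
  have h2 := ((hasDerivAt_id t).const_sub 1).rpow_const (p := p - 2)
    (Or.inl (sub_pos.2 ht.2).ne')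
  refine ((h1.sub (h2.const_mul (c ^ p))).const_mul (p * (p - 1))).congr_deriv ?_
  simp only [phiDeriv3, id, show p - 2 - 1 = p - 3 by ring]
  ring

theorem continuous_phiDeriv (hp : 1 < p) : Continuous (phiDeriv p c) := by
  unfold phiDeriv
  have h : 0 ≤ p - 1 := (sub_pos.2 hp).le
  fun_prop (disch := assumption)

theorem phiDeriv2_nonpos (hp : 1 ≤ p) (hc : 1 ≤ c) {t : ℝ} (ht : t < 1)
    (hcmp : t ^ (p - 2) ≤ (c * (1 - t)) ^ (p - 2)) :
    phiDeriv2 p c t ≤ 0 := by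
  have h1t : 0 ≤ 1 - t := by linarith
  have : t ^ (p - 2) ≤ c ^ p * (1 - t) ^ (p - 2) := by
    calc t ^ (p - 2) ≤ c ^ (p - 2) * (1 - t) ^ (p - 2) := by
          rwa [← mul_rpow (by linarith) h1t]
      _ ≤ c ^ p * (1 - t) ^ (p - 2) := by
          gcongr
          linarith
  exact mul_nonpos_of_nonneg_of_nonpos (by nlinarith) (by linarith)

theorem mem_Ioo_div_one_add (hc : 0 < c) : c / (1 + c) ∈ Ioo 0 1 :=
  ⟨by positivity, (div_lt_one (by linarith)).2 (by linarith)⟩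

theorem lt_mul_one_sub_iff_lt_div (hc : 0 < c) {t : ℝ} : t < c * (1 - t) ↔ t < c / (1 + c) := by
  rw [lt_div_iff₀ (by linarith)]
  constructor <;> intro h <;> linarith

theorem phi_le_tangent_of_two_le (hp : 2 ≤ p) (hc : 1 ≤ c)
    (hend : phiDeriv p c 1 ≤ phiDeriv p c (c / (1 + c))) {t : ℝ} (ht : t ∈ Icc 0 1) :
    phi p c t ≤ phi p c (c / (1 + c)) + phiDeriv p c (c / (1 + c)) * (t - c / (1 + c)) := by
  have hc0 : 0 < c := by linarith
  obtain ⟨ht₀, ht₀'⟩ := mem_Ioo_div_one_add hc0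
  refine le_tangent_of_hasDerivAt (hasDerivAt_phi (by linarith)) (fun s hs => ?_)
    (fun s hs => ?_) ht
  · refine antitoneOn_of_hasDerivWithinAt_nonpos (f' := phiDeriv2 p c) (convex_Icc 0 _)
      (continuous_phiDeriv (by linarith)).continuousOn
      (fun y hy => ?_) (fun y hy => ?_) hs ⟨ht₀.le, le_rfl⟩ hs.2
    all_goals rw [interior_Icc] at hy
    · exact (hasDerivAt_phiDeriv ⟨hy.1, hy.2.trans ht₀'⟩).hasDerivWithinAt
    · refine phiDeriv2_nonpos (by linarith) hc (hy.2.trans ht₀')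
        (rpow_le_rpow hy.1.le ?_ (by linarith))
      exact ((lt_mul_one_sub_iff_lt_div hc0).2 hy.2).le
  · have hconv : ConvexOn ℝ (Icc 0 1) (phiDeriv p c) := by
      refine convexOn_of_hasDerivWithinAt2_nonneg (f' := phiDeriv2 p c) (f'' := phiDeriv3 p c)
        (convex_Icc 0 1)
        (continuous_phiDeriv (by linarith)).continuousOn
        (fun y hy => ?_) (fun y hy => ?_) (fun y hy => ?_)
      all_goals rw [interior_Icc] at hy
      · exact (hasDerivAt_phiDeriv hy).hasDerivWithinAt
      · exact (hasDerivAt_phiDeriv2 hy).hasDerivWithinAt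
      · have := hy.1.le
        have : 0 ≤ 1 - y := by linarith [hy.2]
        exact mul_nonneg (mul_nonneg (by nlinarith) (by linarith)) (by positivity)
    have := hconv.le_on_segment ⟨ht₀.le, ht₀'.le⟩ ⟨zero_le_one, le_rfl⟩
      (by rwa [segment_eq_Icc ht₀'.le])
    exact this.trans (max_le le_rfl hend)

theorem phi_le_tangent_of_le_two (hp : 1 < p) (hp2 : p ≤ 2) (hc : 1 ≤ c)
    (hend : phiDeriv p c (c / (1 + c)) ≤ phiDeriv p c 0) {t : ℝ} (ht : t ∈ Icc 0 1) :
    phi p c t ≤ phi p c (c / (1 + c)) + phiDeriv p c (c / (1 + c)) * (t - c / (1 + c)) := by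
  have hc0 : 0 < c := by linarith
  obtain ⟨ht₀, ht₀'⟩ := mem_Ioo_div_one_add hc0
  refine le_tangent_of_hasDerivAt (hasDerivAt_phi hp.le) (fun s hs => ?_) (fun s hs => ?_) ht
  · have hconc : ConcaveOn ℝ (Icc 0 1) (phiDeriv p c) := by
      refine concaveOn_of_hasDerivWithinAt2_nonpos (f' := phiDeriv2 p c) (f'' := phiDeriv3 p c)
        (convex_Icc 0 1)
        (continuous_phiDeriv hp).continuousOn
        (fun y hy => ?_) (fun y hy => ?_) (fun y hy => ?_)
      all_goals rw [interior_Icc] at hy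
      · exact (hasDerivAt_phiDeriv hy).hasDerivWithinAt
      · exact (hasDerivAt_phiDeriv2 hy).hasDerivWithinAt
      · have := hy.1.le
        have : 0 ≤ 1 - y := by linarith [hy.2]
        exact mul_nonpos_of_nonpos_of_nonneg
          (mul_nonpos_of_nonneg_of_nonpos (by nlinarith) (by linarith)) (by positivity)
    have := hconc.ge_on_segment ⟨le_rfl, zero_le_one⟩ ⟨ht₀.le, ht₀'.le⟩
      (by rwa [segment_eq_Icc ht₀.le])
    exact (le_min hend le_rfl).trans this
  · refine antitoneOn_of_hasDerivWithinAt_nonpos (f' := phiDeriv2 p c) (convex_Icc _ 1)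
      (continuous_phiDeriv hp).continuousOn
      (fun y hy => ?_) (fun y hy => ?_) ⟨le_rfl, ht₀'.le⟩ hs hs.1
    all_goals rw [interior_Icc] at hy
    · exact (hasDerivAt_phiDeriv ⟨ht₀.trans hy.1, hy.2⟩).hasDerivWithinAt
    · refine phiDeriv2_nonpos hp.le hc hy.2 (rpow_le_rpow_of_nonpos ?_ ?_ (by linarith))
      · have := sub_pos.2 hy.2
        positivity
      · exact le_of_not_gt fun h => lt_asymm ((lt_mul_one_sub_iff_lt_div hc0).1 h) hy.1

theorem one_sub_div_one_add (hc : 0 ≤ c) : 1 - c / (1 + c) = (1 + c)⁻¹ := by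
  field_simp
  ring

theorem phi_div_one_add (hc : 0 ≤ c) : phi p c (c / (1 + c)) = 0 := by
  rw [phi, one_sub_div_one_add hc, div_eq_mul_inv, mul_rpow hc (by positivity), sub_self]

theorem phiDeriv_div_one_add (hc : 0 < c) :
    phiDeriv p c (c / (1 + c)) = p * (c / (1 + c)) ^ (p - 1) * (1 + c) := by
  have hcp : c ^ p = c * c ^ (p - 1) := by
    conv_lhs => rw [show p = 1 + (p - 1) by ring, rpow_add hc, rpow_one]
  rw [phiDeriv, one_sub_div_one_add hc.le, div_eq_mul_inv, mul_rpow hc.le (by positivity), hcp]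
  ring

theorem phiDeriv_one (hp : 1 < p) : phiDeriv p c 1 = p := by
  simp [phiDeriv, zero_rpow (sub_pos.2 hp).ne']

theorem phiDeriv_zero (hp : 1 < p) : phiDeriv p c 0 = p * c ^ p := by
  simp [phiDeriv, zero_rpow (sub_pos.2 hp).ne']

theorem one_le_mul_div_rpow (hp : 2 ≤ p) : 1 ≤ p * ((p - 1) / p) ^ (p - 1) := by
  have hp0 : 0 < p := by linarith
  have h := one_add_mul_self_le_rpow_one_add (s := -p⁻¹)
    (by rw [neg_le_neg_iff]; exact inv_le_one_of_one_le₀ (by linarith)) (by linarith : 1 ≤ p - 1)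
  rw [show 1 + -p⁻¹ = (p - 1) / p by field_simp; ring,
    show 1 + (p - 1) * -p⁻¹ = p⁻¹ by field_simp; ring] at h
  calc (1 : ℝ) = p * p⁻¹ := (mul_inv_cancel₀ hp0.ne').symm
    _ ≤ p * ((p - 1) / p) ^ (p - 1) := by gcongr

theorem mul_rpow_le_rpow (hp : 1 ≤ p) (hp2 : p ≤ 2) : p * (p - 1) ^ (p - 1) ≤ p ^ (p - 1) := by
  have hp0 : 0 < p := by linarith
  have hamgm : p ^ (2 - p) * (p - 1) ^ (p - 1) ≤ 1 := by
    have := geom_mean_le_arith_mean2_weighted (p₁ := p) (p₂ := p - 1) (by linarith) (by linarith)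
      hp0.le (by linarith) (show 2 - p + (p - 1) = 1 by ring)
    linarith
  calc p * (p - 1) ^ (p - 1) = p ^ (p - 1) * (p ^ (2 - p) * (p - 1) ^ (p - 1)) := by
        rw [← mul_assoc, ← rpow_add hp0, show p - 1 + (2 - p) = 1 by ring, rpow_one]
    _ ≤ p ^ (p - 1) := mul_le_of_le_one_right (by positivity) hamgm

theorem phi_le_tangent (hp : 1 < p) {t : ℝ} (ht : t ∈ Icc 0 1) :
    phi p (constant p) t ≤ p * (constant p / (1 + constant p)) ^ (p - 1) *
      ((1 + constant p) * t - constant p) := by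
  set c := constant p with hc_def
  have hc : 1 ≤ c := one_le_constant hp
  have hc0 : 0 < c := by linarith
  suffices phi p c t ≤ phi p c (c / (1 + c)) + phiDeriv p c (c / (1 + c)) * (t - c / (1 + c)) by
    rw [phi_div_one_add hc0.le, phiDeriv_div_one_add hc0] at this
    convert this using 1
    field_simp
    ring
  rcases constant_cases hp with ⟨hp2, hcp⟩ | ⟨hp2, hcp⟩ <;> rw [← hc_def] at hcp
  · refine phi_le_tangent_of_two_le hp2 hc ?_ ht
    rw [phiDeriv_one hp, phiDeriv_div_one_add hc0, hcp, add_sub_cancel]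
    nlinarith [one_le_mul_div_rpow hp2]
  · refine phi_le_tangent_of_le_two hp hp2 hc ?_ ht
    have hp1 : 0 < p - 1 := by linarith
    rw [phiDeriv_zero hp, phiDeriv_div_one_add hc0, hcp,
      show (p - 1)⁻¹ / (1 + (p - 1)⁻¹) = p⁻¹ by field_simp; ring,
      show 1 + (p - 1)⁻¹ = p * (p - 1)⁻¹ by field_simp; ring,
      inv_rpow (by linarith), inv_rpow hp1.le]
    have hpow : (p - 1) ^ p = (p - 1) ^ (p - 1) * (p - 1) := by
      rw [← rpow_add_one hp1.ne', sub_add_cancel]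
    rw [hpow]
    field_simp
    exact mul_rpow_le_rpow hp.le hp2

theorem rpow_sub_mul_rpow_le (hp : 1 < p) {x y : ℝ} (hx : 0 ≤ x) (hy : 0 ≤ y) :
    y ^ p - constant p ^ p * x ^ p ≤
      p * (constant p / (1 + constant p)) ^ (p - 1) * (y - constant p * x) * (x + y) ^ (p - 1) := by
  rcases (add_nonneg hx hy).eq_or_lt with hs | hs
  · obtain ⟨rfl, rfl⟩ : x = 0 ∧ y = 0 := ⟨by linarith, by linarith⟩
    simp [zero_rpow (by linarith : p ≠ 0)]
  have hy1 : y / (x + y) ≤ 1 := (div_le_one hs).2 (by linarith)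
  have h := mul_le_mul_of_nonneg_left (phi_le_tangent hp ⟨by positivity, hy1⟩)
    (rpow_nonneg hs.le p)
  have hxs : 1 - y / (x + y) = x / (x + y) := by field_simp; ring
  have hsp : (x + y) ^ p = (x + y) ^ (p - 1) * (x + y) := by
    rw [← rpow_add_one hs.ne', sub_add_cancel]
  rw [phi, hxs, div_rpow hy hs.le, div_rpow hx hs.le] at h
  have hsp0 : (x + y) ^ p ≠ 0 := (rpow_pos_of_pos hs p).ne'
  calc y ^ p - constant p ^ p * x ^ p
      = (x + y) ^ p * (y ^ p / (x + y) ^ p - constant p ^ p * (x ^ p / (x + y) ^ p)) := by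
        field_simp
    _ ≤ _ := h
    _ = _ := by
        rw [hsp]
        field_simp
        ring

section Curvature

-- `X, U, X''` stand for the value and first two derivatives of `√(‖z + t • h‖ ^ 2 + ε)`, and
-- `H = ‖h‖ ^ 2`; likewise `Y, V, Y''` and `K = ‖k‖ ^ 2` for `w` and `k`.
variable {X Y U V X'' Y'' H K : ℝ}

theorem rpowCurvature_nonpos_of_two_le (hp : 2 ≤ p) (hX : 0 < X) (hY : 0 < Y)
    (hX'' : X * X'' = H - U ^ 2) (hY'' : Y * Y'' = K - V ^ 2) (hV : V ^ 2 ≤ K) (hKH : K ≤ H) :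
    rpowCurvature p (Y - (p - 1) * X) (V - (p - 1) * U) (Y'' - (p - 1) * X'') (X + Y) (U + V)
      (X'' + Y'') ≤ 0 := by
  have : 0 ≤ p - 1 := by linarith
  have : 0 ≤ p - 2 := by linarith
  have : 0 ≤ H - K := by linarith
  have : 0 ≤ K - V ^ 2 := by linarith
  refine nonpos_of_mul_nonpos_right ?_ (mul_pos hX hY)
  calc X * Y * _ = -(X * Y * ((X + Y) * p * ((p - 1) * (H - K) + (p - 2) * (K - V ^ 2))
        + X * p * (p - 1) * (p - 2) * (U + V) ^ 2)
        + p * (p - 2) * (X + Y) * (K - V ^ 2) * X ^ 2) := by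
        unfold rpowCurvature
        linear_combination ((p - 1) * (X + Y) * ((Y - (p - 1) * X) - (X + Y)) * Y) * hX''
          + (((X + Y) ^ 2 + (p - 1) * (Y - (p - 1) * X) * (X + Y)) * X) * hY''
    _ ≤ 0 := neg_nonpos.2 (by positivity)

theorem rpowCurvature_nonpos_of_le_two (hp : 1 < p) (hp2 : p ≤ 2) (hX : 0 < X) (hY : 0 < Y)
    (hX'' : X * X'' = H - U ^ 2) (hY'' : Y * Y'' = K - V ^ 2) (hU : U ^ 2 ≤ H) (hKH : K ≤ H) :
    rpowCurvature p (Y - (p - 1)⁻¹ * X) (V - (p - 1)⁻¹ * U) (Y'' - (p - 1)⁻¹ * X'') (X + Y)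
      (U + V) (X'' + Y'') ≤ 0 := by
  have hp1 : 0 < p - 1 := by linarith
  have hscale : rpowCurvature p (Y - (p - 1)⁻¹ * X) (V - (p - 1)⁻¹ * U) (Y'' - (p - 1)⁻¹ * X'')
      (X + Y) (U + V) (X'' + Y'') = (p - 1)⁻¹ * rpowCurvature p ((p - 1) * Y - X)
        ((p - 1) * V - U) ((p - 1) * Y'' - X'') (X + Y) (U + V) (X'' + Y'') := by
    unfold rpowCurvature
    field_simp
  rw [hscale]
  refine mul_nonpos_of_nonneg_of_nonpos (inv_nonneg.2 hp1.le) ?_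
  have : 0 ≤ 2 - p := by linarith
  have : 0 ≤ H - U ^ 2 := by linarith
  have : 0 ≤ H - K := by linarith
  refine nonpos_of_mul_nonpos_right ?_ (mul_pos hX hY)
  calc X * Y * _ = -(X * Y * ((X + Y) * p * ((2 - p) * (H - U ^ 2) + (p - 1) * (H - K))
        + Y * p * (p - 1) * (2 - p) * (U + V) ^ 2)
        + p * (2 - p) * (X + Y) * Y ^ 2 * (H - U ^ 2)) := by
        unfold rpowCurvature
        linear_combination ((-(X + Y) ^ 2 + (p - 1) * ((p - 1) * Y - X) * (X + Y)) * Y) * hX''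
          + (((p - 1) * (X + Y) ^ 2 + (p - 1) * ((p - 1) * Y - X) * (X + Y)) * X) * hY''
    _ ≤ 0 := neg_nonpos.2 (by positivity)

end Curvature

theorem concaveOn_sqrtQuad {p a b C a' b' C' : ℝ} (hp : 1 < p)
    (hQ : ∀ t, 0 < a + 2 * b * t + C * t ^ 2) (hQ' : ∀ t, 0 < a' + 2 * b' * t + C' * t ^ 2)
    (hC : C' ≤ C) :
    ConcaveOn ℝ univ (fun t => (sqrtQuad a' b' C' t - constant p * sqrtQuad a b C t) *
      (sqrtQuad a b C t + sqrtQuad a' b' C' t) ^ (p - 1)) := by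
  set X := sqrtQuad a b C
  set Y := sqrtQuad a' b' C'
  set U := sqrtQuadDeriv a b C
  set V := sqrtQuadDeriv a' b' C'
  set X'' := fun t => (C - U t ^ 2) / X t
  set Y'' := fun t => (C' - V t ^ 2) / Y t
  have hX t : HasDerivAt X (U t) t := hasDerivAt_sqrtQuad (hQ t)
  have hY t : HasDerivAt Y (V t) t := hasDerivAt_sqrtQuad (hQ' t)
  have hU t : HasDerivAt U (X'' t) t := hasDerivAt_sqrtQuadDeriv (hQ t)
  have hV t : HasDerivAt V (Y'' t) t := hasDerivAt_sqrtQuadDeriv (hQ' t)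
  refine concaveOn_mul_rpow (fun t => (hY t).sub ((hX t).const_mul _))
    (fun t => (hV t).sub ((hU t).const_mul _)) (fun t => (hX t).add (hY t))
    (fun t => (hU t).add (hV t)) (fun t => add_pos (sqrtQuad_pos (hQ t)) (sqrtQuad_pos (hQ' t)))
    (fun t => ?_)
  have hXX'' : X t * X'' t = C - U t ^ 2 := mul_div_cancel₀ _ (sqrtQuad_pos (hQ t)).ne'
  have hYY'' : Y t * Y'' t = C' - V t ^ 2 := mul_div_cancel₀ _ (sqrtQuad_pos (hQ' t)).ne'
  rcases constant_cases hp with ⟨hp2, hc⟩ | ⟨hp2, hc⟩ <;> rw [hc]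
  · exact rpowCurvature_nonpos_of_two_le hp2 (sqrtQuad_pos (hQ t)) (sqrtQuad_pos (hQ' t))
      hXX'' hYY'' (sqrtQuadDeriv_sq_le hQ' t) hC
  · exact rpowCurvature_nonpos_of_le_two hp hp2 (sqrtQuad_pos (hQ t)) (sqrtQuad_pos (hQ' t))
      hXX'' hYY'' (sqrtQuadDeriv_sq_le hQ t) hC

theorem concaveOn_norm_add_smul (𝕜 : Type*) {ℍ : Type*} [RCLike 𝕜] [NormedAddCommGroup ℍ]
    [InnerProductSpace 𝕜 ℍ] [NormedSpace ℝ ℍ] [IsScalarTower ℝ 𝕜 ℍ] {p : ℝ} (hp : 1 < p)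
    (z w h k : ℍ) (hkh : ‖k‖ ≤ ‖h‖) :
    ConcaveOn ℝ univ (fun t : ℝ => (‖w + t • k‖ - constant p * ‖z + t • h‖) *
      (‖z + t • h‖ + ‖w + t • k‖) ^ (p - 1)) := by
  -- `Q z h ε t = √(‖z + t • h‖ ^ 2 + ε)` by `norm_add_smul_sq`
  let Q (z h : ℍ) (ε : ℝ) : ℝ → ℝ := sqrtQuad (‖z‖ ^ 2 + ε) (RCLike.re (inner 𝕜 z h)) (‖h‖ ^ 2)
  have hQ (z h : ℍ) (t : ℝ) : Tendsto (fun ε => Q z h ε t) (𝓝[>] 0) (𝓝 ‖z + t • h‖) := by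
    have hcont : Continuous fun ε => Q z h ε t := by
      simp only [Q, sqrtQuad]
      fun_prop
    convert (hcont.tendsto 0).mono_left nhdsWithin_le_nhds using 2
    simp only [Q, sqrtQuad, add_zero, ← norm_add_smul_sq, sqrt_sq (norm_nonneg _)]
  refine ConcaveOn.of_tendsto (l := 𝓝[>] 0)
    (f := fun ε t => (Q w k ε t - constant p * Q z h ε t) * (Q z h ε t + Q w k ε t) ^ (p - 1))
    ?_ fun t _ => ?_
  · filter_upwards [self_mem_nhdsWithin] with ε (hε : 0 < ε)
    refine concaveOn_sqrtQuad hp (fun t => ?_) (fun t => ?_)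
      (pow_le_pow_left₀ (norm_nonneg _) hkh 2)
    · nlinarith [norm_add_smul_sq (𝕜 := 𝕜) z h t, sq_nonneg ‖z + t • h‖]
    · nlinarith [norm_add_smul_sq (𝕜 := 𝕜) w k t, sq_nonneg ‖w + t • k‖]
  · exact ((hQ w k t).sub ((hQ z h t).const_mul _)).mul
      (((hQ z h t).add (hQ w k t)).rpow_const (Or.inr (sub_pos.2 hp).le))

end Burkholder

open Burkholder in
theorem stmt_19_general (𝕜 : Type*) [RCLike 𝕜] (ℍ : Type*) [NormedAddCommGroup ℍ]
    [InnerProductSpace 𝕜 ℍ] [NormedSpace ℝ ℍ] [IsScalarTower ℝ 𝕜 ℍ]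
    (p q : ℝ) (hp : 1 < p) (hq : 1 / p + 1 / q = 1)
    (pstar αp : ℝ) (hpstar : pstar = max p q) (hαp : αp = p * (1 - 1 / pstar) ^ (p - 1))
    (V U : ℍ → ℍ → ℝ)
    (hV : ∀ z w : ℍ, V z w = ‖w‖ ^ p - (pstar - 1) ^ p * ‖z‖ ^ p)
    (hU : ∀ z w : ℍ, U z w = αp * (‖w‖ - (pstar - 1) * ‖z‖) * (‖z‖ + ‖w‖) ^ (p - 1)) :
    (∀ z w : ℍ, V z w ≤ U z w) ∧
      ∀ z w h k : ℍ, ‖k‖ ≤ ‖h‖ →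
        ConcaveOn ℝ Set.univ (fun t : ℝ => U (z + t • h) (w + t • k)) := by
  have hc : pstar - 1 = constant p := by
    rw [hpstar]
    exact max_sub_one_eq_constant
      (Real.holderConjugate_iff.2 ⟨hp, by simpa only [one_div] using hq⟩)
  have hc1 := one_le_constant hp
  have hα : αp = p * (constant p / (1 + constant p)) ^ (p - 1) := by
    have : 0 < pstar := by linarith
    rw [hαp, ← hc, add_sub_cancel]
    congr 2
    field_simp
  refine ⟨fun z w => ?_, fun z w h k hkh => ?_⟩
  · rw [hV, hU, hα, hc]
    exact rpow_sub_mul_rpow_le hp (norm_nonneg z) (norm_nonneg w)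
  · have hα0 : 0 ≤ αp := by
      rw [hα]
      have : 0 < constant p := by linarith
      positivity
    simp only [hU, hc, mul_assoc αp]
    exact (concaveOn_norm_add_smul 𝕜 hp z w h k hkh).smul hα0

/-- properties of Burkholder's functions `U` and `V`: let `ℍ` be a
(real or complex) Hilbert space, `1 < p < ∞`, `p* = max(p,q)` with `1/p + 1/q = 1`,
`α_p = p (1 - 1/p*)^{p-1}`, `V(z,w) = |w|^p - (p*-1)^p |z|^p` and
`U(z,w) = α_p (|w| - (p*-1)|z|)(|z| + |w|)^{p-1}`. Then `V ≤ U` everywhere, and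
for `|k| ≤ |h|` the map `t ↦ U(z + t h, w + t k)` is concave on `ℝ`. -/
theorem stmt_19 (𝕜 : Type*) [RCLike 𝕜] (ℍ : Type*) [NormedAddCommGroup ℍ]
    [InnerProductSpace 𝕜 ℍ] [NormedSpace ℝ ℍ] [IsScalarTower ℝ 𝕜 ℍ] [CompleteSpace ℍ]
    (p q : ℝ) (hp : 1 < p) (hq : 1 / p + 1 / q = 1)
    (pstar αp : ℝ) (hpstar : pstar = max p q) (hαp : αp = p * (1 - 1 / pstar) ^ (p - 1))
    (V U : ℍ → ℍ → ℝ)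
    (hV : ∀ z w : ℍ, V z w = ‖w‖ ^ p - (pstar - 1) ^ p * ‖z‖ ^ p)
    (hU : ∀ z w : ℍ, U z w = αp * (‖w‖ - (pstar - 1) * ‖z‖) * (‖z‖ + ‖w‖) ^ (p - 1)) :
    (∀ z w : ℍ, V z w ≤ U z w) ∧
      ∀ z w h k : ℍ, ‖k‖ ≤ ‖h‖ →
        ConcaveOn ℝ Set.univ (fun t : ℝ => U (z + t • h) (w + t • k)) :=
  stmt_19_general 𝕜 ℍ p q hp hq pstar αp hpstar hαp V U hV hU
end
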